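/- arXiv:1903.11936 — 4 statements merged into one kernel-verified Lean document; each statement's English description precedes it below -/
import Mathlib

section
/- Let n ≥ 2 be an integer, s ∈ ℕ, F ∈ [0,1], and let X be the sum of s independent Bernoulli random variables each taking the value 1 with probability F. Then for every real c > 0, Pr[ |F·s − X| > max{c·log₂ n, F·s} ] ≤ n^(−c/(6·ln 2)). -/
open MeasureTheory ProbabilityTheory Real
open scoped ENNReal

/-!
Since `X ≥ 0` and the threshold `m = max (c log₂ n) (F s)` is at least `F s = E[X]`, only the upper
tail `X ≥ F s + m` can occur. The Chernoff bound at `t = ln 2` together with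
`E[2^X] = (1 + F)^s ≤ e^{F s}` bounds its probability by `exp (F s - ln 2 (F s + m)) ≤ exp (-m/6)`,
and `m ≥ c log₂ n` turns this into `n^(-c/(6 ln 2))`.
-/

lemma exp_mul_eq_one_add_indicator {Ω : Type*} {Y : Ω → ℝ} (h01 : ∀ ω, Y ω = 0 ∨ Y ω = 1) (t : ℝ) :
    (fun ω => exp (t * Y ω)) = fun ω => 1 + {ω | Y ω = 1}.indicator (fun _ => exp t - 1) ω := by
  funext ω
  rcases h01 ω with h | h <;> simp [h]

section ZeroOneValued

variable {Ω : Type*} [MeasurableSpace Ω] {μ : Measure Ω} {Y : Ω → ℝ}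

lemma integrable_exp_mul_of_zero_one [IsFiniteMeasure μ] (hY : Measurable Y)
    (h01 : ∀ ω, Y ω = 0 ∨ Y ω = 1) (t : ℝ) : Integrable (fun ω => exp (t * Y ω)) μ := by
  rw [exp_mul_eq_one_add_indicator h01]
  exact (integrable_const 1).add ((integrable_const _).indicator (hY (measurableSet_singleton 1)))

lemma mgf_of_zero_one [IsProbabilityMeasure μ] (hY : Measurable Y)
    (h01 : ∀ ω, Y ω = 0 ∨ Y ω = 1) (t : ℝ) :
    mgf Y μ t = 1 + μ.real {ω | Y ω = 1} * (exp t - 1) := by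
  have hA : MeasurableSet {ω | Y ω = 1} := hY (measurableSet_singleton 1)
  rw [mgf, exp_mul_eq_one_add_indicator h01,
    integral_add (integrable_const 1) ((integrable_const _).indicator hA), integral_indicator hA]
  simp

lemma mgf_le_exp_of_zero_one [IsProbabilityMeasure μ] (hY : Measurable Y)
    (h01 : ∀ ω, Y ω = 0 ∨ Y ω = 1) (t : ℝ) :
    mgf Y μ t ≤ exp (μ.real {ω | Y ω = 1} * (exp t - 1)) := by
  rw [mgf_of_zero_one hY h01, add_comm]
  exact add_one_le_exp _

end ZeroOneValued

theorem measureReal_le_sum_le_of_zero_one {Ω ι : Type*} [MeasurableSpace Ω] {μ : Measure Ω}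
    [IsProbabilityMeasure μ] {Y : ι → Ω → ℝ} (hY : ∀ i, Measurable (Y i)) (hindep : iIndepFun Y μ)
    (h01 : ∀ i ω, Y i ω = 0 ∨ Y i ω = 1) (s : Finset ι) {t : ℝ} (ht : 0 ≤ t) (a : ℝ) :
    μ.real {ω | a ≤ ∑ i ∈ s, Y i ω}
      ≤ exp (-t * a + (∑ i ∈ s, μ.real {ω | Y i ω = 1}) * (exp t - 1)) := by
  have hint : Integrable (fun ω => exp (t * (∑ i ∈ s, Y i) ω)) μ :=
    hindep.integrable_exp_mul_sum hY fun i _ => integrable_exp_mul_of_zero_one (hY i) (h01 i) t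
  have hmgf : mgf (∑ i ∈ s, Y i) μ t ≤ exp ((∑ i ∈ s, μ.real {ω | Y i ω = 1}) * (exp t - 1)) := by
    rw [hindep.mgf_sum hY, Finset.sum_mul, exp_sum]
    exact Finset.prod_le_prod (fun i _ => mgf_nonneg)
      fun i _ => mgf_le_exp_of_zero_one (hY i) (h01 i) t
  calc μ.real {ω | a ≤ ∑ i ∈ s, Y i ω}
      = μ.real {ω | a ≤ (∑ i ∈ s, Y i) ω} := by simp only [Finset.sum_apply]
    _ ≤ exp (-t * a) * mgf (∑ i ∈ s, Y i) μ t := measure_ge_le_exp_mul_mgf a ht hint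
    _ ≤ exp (-t * a) * exp ((∑ i ∈ s, μ.real {ω | Y i ω = 1}) * (exp t - 1)) := by gcongr
    _ = _ := (exp_add _ _).symm

lemma add_lt_of_lt_abs_sub_of_nonneg {a m x : ℝ} (hx : 0 ≤ x) (ha : a ≤ m) (h : m < |a - x|) :
    a + m < x := by
  rcases lt_abs.1 h with h | h <;> linarith

/-- The constant `6` comes from `1 - 2 ln 2 < -1/6`. -/
lemma sub_log_two_mul_add_le {a m : ℝ} (ha : 0 ≤ a) (ham : a ≤ m) :
    a - log 2 * (a + m) ≤ -(m / 6) := by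
  have := log_two_gt_d9
  nlinarith

theorem sampled_error_concentration_general
    {Ω : Type*} [MeasurableSpace Ω] (μ : Measure Ω) [IsProbabilityMeasure μ]
    (n : ℕ) (hn : 2 ≤ n) (s : ℕ) (F : ℝ) (hF0 : 0 ≤ F)
    (Y : Fin s → Ω → ℝ) (hmeas : ∀ i, Measurable (Y i))
    (hindep : iIndepFun Y μ)
    (hBernoulli : ∀ i : Fin s, ∀ ω : Ω, Y i ω = 0 ∨ Y i ω = 1)
    (hprob : ∀ i : Fin s, μ {ω | Y i ω = 1} = ENNReal.ofReal F)
    (X : Ω → ℝ) (hX : ∀ ω, X ω = ∑ i : Fin s, Y i ω)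
    (c : ℝ) :
    μ {ω | max (c * Real.logb 2 n) (F * s) < |F * s - X ω|}
      ≤ ENNReal.ofReal ((n : ℝ) ^ (-(c / (6 * Real.log 2)))) := by
  set m := max (c * logb 2 n) (F * s)
  have hFs : 0 ≤ F * s := by positivity
  have hp (i : Fin s) : μ.real {ω | Y i ω = 1} = F := by
    rw [measureReal_def, hprob i, ENNReal.toReal_ofReal hF0]
  have htail : μ.real {ω | F * s + m ≤ X ω} ≤ exp (-(m / 6)) := by
    simp only [hX]
    calc _ ≤ exp (-log 2 * (F * s + m) + (∑ i, μ.real {ω | Y i ω = 1}) * (exp (log 2) - 1)) :=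
          measureReal_le_sum_le_of_zero_one hmeas hindep hBernoulli _ (log_nonneg one_le_two) _
      _ = exp (F * s - log 2 * (F * s + m)) := by
          simp only [hp, Finset.sum_const, Finset.card_univ, Fintype.card_fin, nsmul_eq_mul,
            exp_log two_pos]
          ring_nf
      _ ≤ exp (-(m / 6)) := exp_le_exp.2 (sub_log_two_mul_add_le hFs (le_max_right _ _))
  have hbound : exp (-(m / 6)) ≤ (n : ℝ) ^ (-(c / (6 * log 2))) := by
    have hlogb : c * (log n / log 2) ≤ m := le_max_left _ _
    rw [rpow_def_of_pos (Nat.cast_pos.2 (by omega)), exp_le_exp]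
    calc -(m / 6) ≤ -(c * (log n / log 2) / 6) := by linarith
      _ = _ := by ring
  have hX0 (ω : Ω) : 0 ≤ X ω :=
    hX ω ▸ Finset.sum_nonneg fun i _ => (hBernoulli i ω).elim (·.ge) (· ▸ zero_le_one)
  calc μ {ω | m < |F * s - X ω|} ≤ μ {ω | F * s + m ≤ X ω} := measure_mono fun ω hω =>
        (add_lt_of_lt_abs_sub_of_nonneg (hX0 ω) (le_max_right _ _) hω).le
    _ = ENNReal.ofReal (μ.real {ω | F * s + m ≤ X ω}) := (ofReal_measureReal).symm
    _ ≤ _ := ENNReal.ofReal_le_ofReal (htail.trans hbound)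

/-- Let `n ≥ 2`, `s ∈ ℕ`, `F ∈ [0,1]`, and let `X` be the sum of `s`
independent Bernoulli random variables each taking the value `1` with probability `F`
(so `E[X] = F·s`). Then for every real `c > 0`,
`Pr[ |F·s − X| > max{c·log₂ n, F·s} ] ≤ n^(−c/(6·ln 2))`. -/
theorem sampled_error_concentration
    {Ω : Type*} [MeasurableSpace Ω] (μ : Measure Ω) [IsProbabilityMeasure μ]
    (n : ℕ) (hn : 2 ≤ n) (s : ℕ) (F : ℝ) (hF0 : 0 ≤ F) (hF1 : F ≤ 1)
    (Y : Fin s → Ω → ℝ) (hmeas : ∀ i, Measurable (Y i))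
    (hindep : iIndepFun Y μ)
    (hBernoulli : ∀ i : Fin s, ∀ ω : Ω, Y i ω = 0 ∨ Y i ω = 1)
    (hprob : ∀ i : Fin s, μ {ω | Y i ω = 1} = ENNReal.ofReal F)
    (X : Ω → ℝ) (hX : ∀ ω, X ω = ∑ i : Fin s, Y i ω)
    (c : ℝ) (hc : 0 < c) :
    μ {ω | max (c * Real.logb 2 n) (F * s) < |F * s - X ω|}
      ≤ ENNReal.ofReal ((n : ℝ) ^ (-(c / (6 * Real.log 2)))) :=
  sampled_error_concentration_general μ n hn s F hF0 Y hmeas hindep hBernoulli hprob X hX c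
end

section
/- Let n ≥ 2, let S ⊆ {1, …, n} with |S| = U < n, let i ∈ S and j ∉ S. Define the ancestor function A(x) = ⋀_{s∈S} x_s and the offspring function B(x) = (⋀_{s∈S\{i}} x_s) ∧ (x_i ∨ x_j), and let AND_n(x) = x_1 ∧ … ∧ x_n. Then: (a) on every assignment x ∈ {0,1}^n on which A differs from AND_n, B also differs from AND_n; and (b) the set W of witnesses, namely assignments x with x_i = 0 and x_s = 1 for all s ∈ (S\{i}) ∪ {j}, has exactly 2^(n−U−1) elements, and on every assignment in W the offspring B differs from AND_n while the ancestor A agrees with AND_n. -/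
lemma count_fixed {n : ℕ} (T : Finset (Fin n)) (f : Fin n → Bool) :
    Nat.card {x : Fin n → Bool // ∀ s ∈ T, x s = f s} = 2 ^ (n - T.card) := by
  have e : {x : Fin n → Bool // ∀ s ∈ T, x s = f s} ≃ (↥(Tᶜ) → Bool) :=
    { toFun := fun x s => x.1 s.1
      invFun := fun g => ⟨fun s => if h : s ∈ T then f s else g ⟨s, by simpa using h⟩,
        fun s hs => by simp [hs]⟩
      left_inv := by
        rintro ⟨x, hx⟩
        ext s
        by_cases h : s ∈ T <;> simp [h, hx s]
      right_inv := by
        intro g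
        ext ⟨s, hs⟩
        have h : s ∉ T := by simpa using hs
        simp [h] }
  rw [Nat.card_congr e]
  simp [Nat.card_eq_fintype_card, Finset.card_compl]

/-- Let `S ⊆ {1,…,n}` with `|S| = U < n`, `i ∈ S`, `j ∉ S`. Let
`A(x) = ⋀_{s∈S} x_s` be the ancestor, `B(x) = (⋀_{s∈S\{i}} x_s) ∧ (x_i ∨ x_j)` the offspring,
and `AND_n(x) = x_1 ∧ … ∧ x_n`. Then: (a) wherever `A` differs from `AND_n`, so does `B`;
and (b) the set `W` of witnesses (assignments with `x_i = 0` and `x_s = 1` for all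
`s ∈ (S\{i}) ∪ {j}`) has exactly `2^(n−U−1)` elements, and on every witness `B` differs
from `AND_n` while `A` agrees with `AND_n`. -/
theorem witness_counting (n U : ℕ) (hn : 2 ≤ n)
    (S : Finset (Fin n)) (hU : S.card = U) (hUn : U < n)
    (i j : Fin n) (hi : i ∈ S) (hj : j ∉ S) :
    (∀ x : Fin n → Bool,
        ¬ ((∀ s ∈ S, x s = true) ↔ (∀ s : Fin n, x s = true)) →
        ¬ (((∀ s ∈ S.erase i, x s = true) ∧ (x i = true ∨ x j = true))
            ↔ (∀ s : Fin n, x s = true)))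
    ∧ Nat.card {x : Fin n → Bool //
          x i = false ∧ ∀ s ∈ insert j (S.erase i), x s = true} = 2 ^ (n - U - 1)
    ∧ (∀ x : Fin n → Bool,
        (x i = false ∧ ∀ s ∈ insert j (S.erase i), x s = true) →
        (¬ (((∀ s ∈ S.erase i, x s = true) ∧ (x i = true ∨ x j = true))
              ↔ (∀ s : Fin n, x s = true))
          ∧ ((∀ s ∈ S, x s = true) ↔ (∀ s : Fin n, x s = true)))) := by
  have hij : i ≠ j := fun h => hj (h ▸ hi)
  refine ⟨?_, ?_, ?_⟩
  · intro x hA hB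
    apply hA
    constructor
    · intro hS
      exact hB.mp ⟨fun s hs => hS s (Finset.mem_of_mem_erase hs), Or.inl (hS i hi)⟩
    · intro hall s _
      exact hall s
  · -- counting
    have hiT : i ∉ insert j (S.erase i) := by
      simp [hij, Finset.mem_erase]
    have key : Nat.card {x : Fin n → Bool //
          x i = false ∧ ∀ s ∈ insert j (S.erase i), x s = true}
        = Nat.card {x : Fin n → Bool //
          ∀ s ∈ insert i (insert j (S.erase i)), x s = (decide (s ≠ i))} := by
      apply Nat.card_congr
      apply Equiv.subtypeEquivRight
      intro x
      constructor
      · rintro ⟨h1, h2⟩ s hs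
        rcases Finset.mem_insert.mp hs with rfl | hs
        · simpa using h1
        · have hsi : s ≠ i := by rintro rfl; exact hiT hs
          simp [hsi, h2 s hs]
      · intro h
        refine ⟨by simpa using h i (Finset.mem_insert_self _ _), fun s hs => ?_⟩
        have hsi : s ≠ i := by rintro rfl; exact hiT hs
        simpa [hsi] using h s (Finset.mem_insert_of_mem hs)
    have hc : (insert i (insert j (S.erase i))).card = U + 1 := by
      have hjT : j ∉ S.erase i := fun h => hj (Finset.mem_of_mem_erase h)
      rw [Finset.card_insert_of_notMem hiT,
          Finset.card_insert_of_notMem hjT,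
          Finset.card_erase_of_mem hi, hU]
      have h1U : 1 ≤ U := by
        rw [← hU]; exact Finset.card_pos.mpr ⟨i, hi⟩
      rw [Nat.sub_add_cancel h1U]
    have hcf := count_fixed (insert i (insert j (S.erase i))) (fun s => decide (s ≠ i))
    rw [hc] at hcf
    rw [key, Nat.sub_sub]
    exact hcf
  · rintro x ⟨h1, h2⟩
    have hxj : x j = true := h2 j (Finset.mem_insert_self _ _)
    have herase : ∀ s ∈ S.erase i, x s = true :=
      fun s hs => h2 s (Finset.mem_insert_of_mem hs)
    constructor
    · intro hB
      have := hB.mp ⟨herase, Or.inr hxj⟩ i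
      simp [h1] at this
    · constructor
      · intro hS
        have := hS i hi
        simp [h1] at this
      · intro hall s _
        exact hall s
end

section
/- Let n ≥ 2, let S ⊆ {1, …, n} with |S| = U < n, let i ∈ S and j ∉ S. Then the Boolean function B(x) = (⋀_{s∈S\{i}} x_s) ∧ (x_i ∨ x_j) differs from AND_n(x) = x_1 ∧ … ∧ x_n on exactly 3·2^(n−U−1) − 1 assignments x ∈ {0,1}^n; in particular, since 3·2^(n−U−1) − 1 > 2^(n−U) − 1, replacing one variable of a conjunction of U distinct variables by a disjunction with a new variable strictly increases the number of assignments on which the function disagrees with AND_n. -/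
/-- Let `S ⊆ {1,…,n}` with `|S| = U < n`, `i ∈ S`, `j ∉ S`. Then
`B(x) = (⋀_{s∈S\{i}} x_s) ∧ (x_i ∨ x_j)` differs from `AND_n` on exactly
`3·2^(n−U−1) − 1` assignments; in particular `3·2^(n−U−1) − 1 > 2^(n−U) − 1`, so replacing
a variable of a conjunction of `U` distinct variables by a disjunction with a new variable
strictly increases the number of disagreements with `AND_n`. -/
theorem or_insertion_disagreement_count (n U : ℕ) (hn : 2 ≤ n)
    (S : Finset (Fin n)) (hU : S.card = U) (hUn : U < n)
    (i j : Fin n) (hi : i ∈ S) (hj : j ∉ S) :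
    Nat.card {x : Fin n → Bool //
        ¬ (((∀ s ∈ S.erase i, x s = true) ∧ (x i = true ∨ x j = true))
            ↔ (∀ s : Fin n, x s = true))} = 3 * 2 ^ (n - U - 1) - 1
    ∧ 2 ^ (n - U) - 1 < 3 * 2 ^ (n - U - 1) - 1 := by
  classical
  set A : Finset (Fin n) := S.erase i with hA
  have hiA : i ∉ A := Finset.notMem_erase i S
  have hjA : j ∉ A := fun h => hj (Finset.mem_of_mem_erase h)
  have hij : i ≠ j := fun h => hj (h ▸ hi)
  have hAcard : A.card = U - 1 := by rw [hA, Finset.card_erase_of_mem hi, hU]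
  have hU1 : 1 ≤ U := by
    have := Finset.card_pos.mpr ⟨i, hi⟩; omega
  set P : (Fin n → Bool) → Prop :=
    fun x => (∀ s ∈ A, x s = true) ∧ (x i = true ∨ x j = true) with hP
  set T : Finset (Fin n) := insert i (insert j A) with hT
  have hTcard : T.card = U + 1 := by
    rw [hT, Finset.card_insert_of_notMem, Finset.card_insert_of_notMem hjA, hAcard]
    · omega
    · simp [hij, hiA]
  -- the equiv counting P-true assignments
  have e : {x : Fin n → Bool // P x} ≃
      ({p : Bool × Bool // p.1 = true ∨ p.2 = true} × ({s : Fin n // s ∉ T} → Bool)) := by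
    refine ⟨fun x => (⟨(x.1 i, x.1 j), x.2.2⟩, fun s => x.1 s.1),
      fun q => ⟨fun s => if h : s ∈ T then
        (if s = i then q.1.1.1 else if s = j then q.1.1.2 else true) else q.2 ⟨s, h⟩, ?_, ?_⟩,
      ?_, ?_⟩
    · intro s hs
      have hsT : s ∈ T := by simp [hT, hs]
      have hsi : s ≠ i := fun h => hiA (h ▸ hs)
      have hsj : s ≠ j := fun h => hjA (h ▸ hs)
      simp [hsT, hsi, hsj]
    · have hiT : i ∈ T := by simp [hT]
      have hjT : j ∈ T := by simp [hT]
      simpa [hiT, hjT, hij, Ne.symm hij] using q.1.2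
    · rintro ⟨x, hx1, hx2⟩
      ext s
      by_cases h : s ∈ T
      · by_cases h1 : s = i
        · simp [h, h1]
        · by_cases h2 : s = j
          · subst h2; simp [h, Ne.symm hij]
          · have hsA : s ∈ A := by
              rw [hT] at h; simp [h1, h2] at h; exact h
            simp [h, h1, h2, hx1 s hsA]
      · simp [h]
    · rintro ⟨⟨⟨a, b⟩, hab⟩, f⟩
      have hiT : i ∈ T := by simp [hT]
      have hjT : j ∈ T := by simp [hT]
      refine Prod.ext ?_ ?_
      · simp [hiT, hjT, hij, Ne.symm hij]
      · funext s
        simp [s.2]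
  have hcompl : Fintype.card {s : Fin n // s ∉ T} = n - U - 1 := by
    have : Fintype.card {s : Fin n // s ∉ T} = Tᶜ.card := by
      simp [Fintype.card_subtype, Finset.filter_not, Finset.compl_eq_univ_sdiff]
    rw [this, Finset.card_compl, hTcard, Fintype.card_fin]
    omega
  have hcardP : Nat.card {x : Fin n → Bool // P x} = 3 * 2 ^ (n - U - 1) := by
    rw [Nat.card_congr e, Nat.card_prod, Nat.card_eq_fintype_card,
      Nat.card_eq_fintype_card, Fintype.card_fun, hcompl]
    congr 1
  -- now relate to the disagreement set
  have hkey : ∀ x : Fin n → Bool,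
      (¬ (((∀ s ∈ A, x s = true) ∧ (x i = true ∨ x j = true))
          ↔ (∀ s : Fin n, x s = true))) ↔ (P x ∧ ¬ (∀ s : Fin n, x s = true)) := by
    intro x
    have himp : (∀ s : Fin n, x s = true) → P x :=
      fun h => ⟨fun s _ => h s, Or.inl (h i)⟩
    rw [hP]
    constructor
    · intro h
      by_cases hall : ∀ s : Fin n, x s = true
      · exact absurd (iff_of_true (himp hall) hall) h
      · refine ⟨?_, hall⟩
        by_contra hPx
        exact h (iff_of_false hPx hall)
    · rintro ⟨h1, h2⟩ hiff
      exact h2 (hiff.mp h1)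
  have hcongr : Nat.card {x : Fin n → Bool //
        ¬ (((∀ s ∈ S.erase i, x s = true) ∧ (x i = true ∨ x j = true))
            ↔ (∀ s : Fin n, x s = true))}
      = Nat.card {x : Fin n → Bool // P x ∧ ¬ (∀ s : Fin n, x s = true)} :=
    Nat.card_congr (Equiv.subtypeEquivRight hkey)
  -- P-true set = disagreement set ∪ {all-true}
  have hsplit : Nat.card {x : Fin n → Bool // P x}
      = Nat.card {x : Fin n → Bool // P x ∧ ¬ (∀ s : Fin n, x s = true)} + 1 := by
    rw [Nat.card_eq_fintype_card, Nat.card_eq_fintype_card,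
      Fintype.card_subtype, Fintype.card_subtype]
    have hfilter : Finset.univ.filter P
        = insert (fun _ => true)
            (Finset.univ.filter (fun x => P x ∧ ¬ (∀ s : Fin n, x s = true))) := by
      ext x
      simp only [Finset.mem_filter, Finset.mem_univ, true_and, Finset.mem_insert]
      constructor
      · intro hx
        by_cases hall : ∀ s : Fin n, x s = true
        · left; funext s; exact hall s
        · right; exact ⟨hx, hall⟩
      · rintro (rfl | ⟨hx, _⟩)
        · exact ⟨fun s _ => rfl, Or.inl rfl⟩
        · exact hx
    rw [hfilter, Finset.card_insert_of_notMem]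
    simp only [Finset.mem_filter, Finset.mem_univ, true_and, not_and, not_not]
    intro _ s
    trivial
  have h1 : 1 ≤ 2 ^ (n - U - 1) := Nat.one_le_two_pow
  clear_value A P T
  have h2 : 2 ^ (n - U) = 2 * 2 ^ (n - U - 1) := by
    rw [← pow_succ']
    congr 1
    clear hcongr hsplit hcardP hcompl
    omega
  have hD := Nat.eq_sub_of_add_eq (hsplit.symm.trans hcardP)
  rw [← hA] at hcongr
  refine ⟨hcongr.trans hD, ?_⟩
  clear hcongr hsplit hcardP hcompl hD
  omega
end

section
/- Let n ≥ 3 and consider the AND–OR formula φ = (x_1 ∧ x_2) ∨ (x_1 ∧ x_2) over variables x_1, …, x_n. Then: (a) φ disagrees with AND_n on exactly 2^(n−2) − 1 assignments in {0,1}^n; and (b) every formula obtained from φ by a single local mutation — either replacing one leaf of φ by any variable x_j (j ∈ {1,…,n}), or deleting one leaf of φ and replacing its parent node by that leaf's sibling subtree — disagrees with AND_n on at least 2^(n−2) − 1 assignments, i.e., no such single mutation strictly decreases the number of disagreements. -/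
/-- AND–OR formulas over variables `x_1, …, x_n`. -/
inductive AndOrFormula (n : ℕ) : Type where
  | var : Fin n → AndOrFormula n
  | and : AndOrFormula n → AndOrFormula n → AndOrFormula n
  | or  : AndOrFormula n → AndOrFormula n → AndOrFormula n

/-- Evaluation of an AND–OR formula on an assignment `v ∈ {0,1}^n` in the usual way. -/
def AndOrFormula.eval {n : ℕ} : AndOrFormula n → (Fin n → Bool) → Bool
  | .var i, v => v i
  | .and a b, v => a.eval v && b.eval v
  | .or a b, v => a.eval v || b.eval v

/-- `SubstLeaf φ ψ`: `ψ` is obtained from `φ` by replacing one leaf by some variable `x_j`. -/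
inductive SubstLeaf {n : ℕ} : AndOrFormula n → AndOrFormula n → Prop where
  | leaf (i j : Fin n) : SubstLeaf (.var i) (.var j)
  | andL {a a' : AndOrFormula n} (b : AndOrFormula n) :
      SubstLeaf a a' → SubstLeaf (.and a b) (.and a' b)
  | andR (a : AndOrFormula n) {b b' : AndOrFormula n} :
      SubstLeaf b b' → SubstLeaf (.and a b) (.and a b')
  | orL {a a' : AndOrFormula n} (b : AndOrFormula n) :
      SubstLeaf a a' → SubstLeaf (.or a b) (.or a' b)
  | orR (a : AndOrFormula n) {b b' : AndOrFormula n} :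
      SubstLeaf b b' → SubstLeaf (.or a b) (.or a b')

/-- `DeleteLeaf φ ψ`: `ψ` is obtained from `φ` by deleting one leaf and replacing its
parent node by that leaf's sibling subtree. -/
inductive DeleteLeaf {n : ℕ} : AndOrFormula n → AndOrFormula n → Prop where
  | delAndL (i : Fin n) (b : AndOrFormula n) : DeleteLeaf (.and (.var i) b) b
  | delAndR (a : AndOrFormula n) (i : Fin n) : DeleteLeaf (.and a (.var i)) a
  | delOrL (i : Fin n) (b : AndOrFormula n) : DeleteLeaf (.or (.var i) b) b
  | delOrR (a : AndOrFormula n) (i : Fin n) : DeleteLeaf (.or a (.var i)) a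
  | andL {a a' : AndOrFormula n} (b : AndOrFormula n) :
      DeleteLeaf a a' → DeleteLeaf (.and a b) (.and a' b)
  | andR (a : AndOrFormula n) {b b' : AndOrFormula n} :
      DeleteLeaf b b' → DeleteLeaf (.and a b) (.and a b')
  | orL {a a' : AndOrFormula n} (b : AndOrFormula n) :
      DeleteLeaf a a' → DeleteLeaf (.or a b) (.or a' b)
  | orR (a : AndOrFormula n) {b b' : AndOrFormula n} :
      DeleteLeaf b b' → DeleteLeaf (.or a b) (.or a b')

/-- Number of assignments on which the formula disagrees with `AND_n`. -/
noncomputable def disagreements {n : ℕ} (ψ : AndOrFormula n) : ℕ :=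
  Nat.card {v : Fin n → Bool // ψ.eval v ≠ decide (∀ s : Fin n, v s = true)}

/-- The set of assignments making two given distinct coordinates true has size `2^(n-2)`. -/
lemma card_two_true {n : ℕ} (i0 i1 : Fin n) (hne : i0 ≠ i1) :
    Nat.card {v : Fin n → Bool // v i0 = true ∧ v i1 = true} = 2 ^ (n - 2) := by
  have e : {v : Fin n → Bool // v i0 = true ∧ v i1 = true} ≃
      ({i : Fin n // i ≠ i0 ∧ i ≠ i1} → Bool) :=
    { toFun := fun v i => v.1 i.1
      invFun := fun g => ⟨fun i => if h : i = i0 ∨ i = i1 then true else g ⟨i, by tauto⟩,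
        by simp⟩
      left_inv := by
        rintro ⟨v, h0, h1⟩
        ext i
        by_cases h : i = i0 ∨ i = i1
        · simp only [dif_pos h]; rcases h with rfl | rfl <;> simp [h0, h1]
        · simp [h]
      right_inv := by
        intro g
        funext i
        have : ¬ (i.1 = i0 ∨ i.1 = i1) := by
          rcases i with ⟨i, hi1, hi2⟩; tauto
        simp [this] }
  rw [Nat.card_congr e, Nat.card_eq_fintype_card, Fintype.card_fun, Fintype.card_bool]
  congr 1
  rw [Fintype.card_subtype]
  have hfil : (Finset.univ.filter fun i : Fin n => i ≠ i0 ∧ i ≠ i1)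
      = Finset.univ \ {i0, i1} := by
    ext i; simp [and_comm]
  rw [hfil, Finset.card_sdiff_of_subset (by simp), Finset.card_pair hne, Finset.card_univ,
    Fintype.card_fin]

lemma disag_lower {n : ℕ} (i0 i1 : Fin n) (hne : i0 ≠ i1) (ψ : AndOrFormula n)
    (h : ∀ v : Fin n → Bool, v i0 = true → v i1 = true → ψ.eval v = true) :
    2 ^ (n - 2) - 1 ≤ disagreements ψ := by
  classical
  set S : Set (Fin n → Bool) := {v | v i0 = true ∧ v i1 = true} with hS
  have hmem : (fun _ => true) ∈ S := ⟨rfl, rfl⟩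
  have hsub : (S \ {fun _ => true}) ⊆
      {v : Fin n → Bool | ψ.eval v ≠ decide (∀ s : Fin n, v s = true)} := by
    rintro v ⟨⟨h0, h1⟩, hv⟩
    simp only [Set.mem_setOf_eq, h v h0 h1]
    simp only [Set.mem_singleton_iff] at hv
    intro hdec
    exact hv (funext fun s => (of_decide_eq_true hdec.symm) s)
  have hScard : S.ncard = 2 ^ (n - 2) := by
    rw [← Nat.card_coe_set_eq]
    exact card_two_true i0 i1 hne
  have hd : (S \ {fun _ => true}).ncard = 2 ^ (n - 2) - 1 := by
    rw [Set.ncard_diff_singleton_of_mem hmem, hScard]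
  calc 2 ^ (n - 2) - 1 = (S \ {fun _ => true}).ncard := hd.symm
    _ ≤ ({v : Fin n → Bool | ψ.eval v ≠ decide (∀ s : Fin n, v s = true)}).ncard :=
        Set.ncard_le_ncard hsub (Set.toFinite _)
    _ = disagreements ψ := by
        rw [disagreements, ← Nat.card_coe_set_eq]
        rfl

lemma disag_base {n : ℕ} (i0 i1 : Fin n) (hne : i0 ≠ i1) :
    disagreements (AndOrFormula.or (.and (.var i0) (.var i1)) (.and (.var i0) (.var i1)))
      = 2 ^ (n - 2) - 1 := by
  classical
  set S : Set (Fin n → Bool) := {v | v i0 = true ∧ v i1 = true} with hS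
  have hmem : (fun _ => true) ∈ S := ⟨rfl, rfl⟩
  have hset : {v : Fin n → Bool |
      (AndOrFormula.or (.and (.var i0) (.var i1))
        (.and (.var i0) (.var i1))).eval v ≠ decide (∀ s : Fin n, v s = true)}
      = S \ {fun _ => true} := by
    ext v
    simp only [Set.mem_setOf_eq, AndOrFormula.eval, Bool.or_self, hS, Set.mem_diff,
      Set.mem_singleton_iff]
    constructor
    · intro hd
      cases h0 : v i0 <;> cases h1 : v i1
      all_goals first
        | (exfalso
           apply hd
           rw [h0, h1]
           simp only [Bool.and_self, Bool.and_false, Bool.false_and, Bool.and_true,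
             Bool.true_and]
           symm
           rw [decide_eq_false_iff_not]
           intro hall
           first
             | (rw [hall i0] at h0; exact Bool.noConfusion h0)
             | (rw [hall i1] at h1; exact Bool.noConfusion h1))
        | (refine ⟨⟨by simp [h0], by simp [h1]⟩, ?_⟩
           intro hv
           apply hd
           subst hv
           simp)
    · rintro ⟨⟨h0, h1⟩, hv⟩
      rw [h0, h1]
      simp only [Bool.and_self, ne_eq]
      intro hdec
      exact hv (funext fun s => (of_decide_eq_true hdec.symm) s)
  have : disagreements (AndOrFormula.or (.and (.var i0) (.var i1))
      (.and (.var i0) (.var i1)))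
      = ({v : Fin n → Bool |
      (AndOrFormula.or (.and (.var i0) (.var i1))
        (.and (.var i0) (.var i1))).eval v ≠ decide (∀ s : Fin n, v s = true)}).ncard := by
    rw [disagreements, ← Nat.card_coe_set_eq]
    rfl
  rw [this, hset, Set.ncard_diff_singleton_of_mem hmem]
  have hScard : S.ncard = 2 ^ (n - 2) := by
    rw [← Nat.card_coe_set_eq]; exact card_two_true i0 i1 hne
  rw [hScard]

/-- For `n ≥ 3`, the formula `φ = (x_1 ∧ x_2) ∨ (x_1 ∧ x_2)` disagrees
with `AND_n` on exactly `2^(n−2) − 1` assignments, and every formula obtained from `φ` by a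
single local mutation (replacing one leaf by any variable, or deleting one leaf and
replacing its parent by the sibling subtree) disagrees with `AND_n` on at least
`2^(n−2) − 1` assignments. -/
theorem local_optimum_formula (n : ℕ) (hn : 3 ≤ n) :
    disagreements (AndOrFormula.or
        (.and (.var (⟨0, by omega⟩ : Fin n)) (.var (⟨1, by omega⟩ : Fin n)))
        (.and (.var (⟨0, by omega⟩ : Fin n)) (.var (⟨1, by omega⟩ : Fin n))))
      = 2 ^ (n - 2) - 1
    ∧ ∀ ψ : AndOrFormula n,
        (SubstLeaf (AndOrFormula.or
            (.and (.var (⟨0, by omega⟩ : Fin n)) (.var (⟨1, by omega⟩ : Fin n)))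
            (.and (.var (⟨0, by omega⟩ : Fin n)) (.var (⟨1, by omega⟩ : Fin n)))) ψ
          ∨ DeleteLeaf (AndOrFormula.or
            (.and (.var (⟨0, by omega⟩ : Fin n)) (.var (⟨1, by omega⟩ : Fin n)))
            (.and (.var (⟨0, by omega⟩ : Fin n)) (.var (⟨1, by omega⟩ : Fin n)))) ψ) →
        2 ^ (n - 2) - 1 ≤ disagreements ψ := by
  have hne : (⟨0, by omega⟩ : Fin n) ≠ (⟨1, by omega⟩ : Fin n) := by
    simp [Fin.ext_iff]
  refine ⟨disag_base _ _ hne, ?_⟩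
  intro ψ hψ
  refine disag_lower (⟨0, by omega⟩ : Fin n) (⟨1, by omega⟩ : Fin n) hne ψ ?_
  intro v h0 h1
  rcases hψ with h | h
  · cases h with
    | orL b h' => simp [AndOrFormula.eval, h0, h1]
    | orR a h' => simp [AndOrFormula.eval, h0, h1]
  · cases h with
    | orL b h' => simp [AndOrFormula.eval, h0, h1]
    | orR a h' => simp [AndOrFormula.eval, h0, h1]
end
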